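/- For every integer n ≥ 1, the real-valued ratio n_{2n,1}(p_k#)/n_{2,1}(p_k#) of the number of occurrences of the gap 2n to the number of occurrences of the gap 2 in the cycle of gaps of p_k# converges, as k → ∞, to ∏_{q odd prime, q | n} (q − 1)/(q − 2), the ratio implicit in Hardy and Littlewood's Conjecture B. -/

import Mathlib

/-- `nGaps N g j` is the number of driving terms of length `j` for the gap `g`
in the cycle of gaps of `N`. -/
def nGaps (N g j : ℕ) : ℕ :=
  ((Finset.Icc 1 N).filter (fun a =>
    Nat.gcd a N = 1 ∧ Nat.gcd (a + g) N = 1 ∧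
      ((Finset.Ioo a (a + g)).filter (fun b => Nat.gcd b N = 1)).card = j - 1)).card

/-- `nthPrime k` is the `k`-th prime, with `nthPrime 1 = 2`. -/
noncomputable def nthPrime (k : ℕ) : ℕ := Nat.nth Nat.Prime (k - 1)

/-!
Write `A_S(N)` (`admissibleCount S N`) for the number of residues `a` mod `N` such that every
`a + s`, `s ∈ S`, is coprime to `N`. By the Chinese remainder theorem `A_S` is multiplicative,
and at a prime `p` it is `p` minus the number of residues of `S` mod `p`. For even `N` the
driving terms of the gap 2 are exactly the pairs counted by `A_{0,2}(N)`, while those of the gap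
`2n` are counted by `A_{0,2n}(N)` up to an error of at most `∑_{0<t<2n} A_{0,t,2n}(N)`. Over
`N = m#` the ratio `A_{0,2n}/A_{0,2}` is a product of local factors, equal to `(q-1)/(q-2)` at
odd `q ∣ n` and to `1` otherwise, and `A_{0,t,2n}/A_{0,2}` has local factors
`(q-3)/(q-2) ≤ exp(-1/q)` for `q > 2n`, so it tends to `0` because `∑ 1/q` diverges.
-/

open Finset Filter Topology

def admissibleCount (S : Finset ℕ) (N : ℕ) : ℕ :=
  #{a ∈ range N | ∀ s ∈ S, Nat.Coprime (a + s) N}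

theorem admissibleCount_eq_card_zmod (S : Finset ℕ) (N : ℕ) [NeZero N] :
    admissibleCount S N = #{a : ZMod N | ∀ s ∈ S, IsUnit (a + s)} := by
  refine card_nbij' (fun a => (a : ZMod N)) ZMod.val ?_ ?_ ?_ ?_
  · intro a ha
    simp only [mem_coe, mem_filter, mem_range, mem_univ, true_and] at ha ⊢
    exact fun s hs => by simpa using (ZMod.isUnit_iff_coprime (a + s) N).2 (ha.2 s hs)
  · intro x hx
    simp only [mem_coe, mem_filter, mem_range, mem_univ, true_and] at hx ⊢
    exact ⟨ZMod.val_lt x, fun s hs =>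
      (ZMod.isUnit_iff_coprime _ N).1 (by simpa using hx s hs)⟩
  · intro a ha
    simp only [mem_coe, mem_filter, mem_range] at ha
    exact ZMod.val_cast_of_lt ha.1
  · intro x _
    exact ZMod.natCast_zmod_val x

theorem card_isUnit_add_mul (S : Finset ℕ) {M N : ℕ} [NeZero M] [NeZero N]
    (h : Nat.Coprime M N) :
    #{a : ZMod (M * N) | ∀ s ∈ S, IsUnit (a + s)} =
      #{a : ZMod M | ∀ s ∈ S, IsUnit (a + s)} *
        #{a : ZMod N | ∀ s ∈ S, IsUnit (a + s)} := by
  rw [← card_product]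
  refine card_equiv (ZMod.chineseRemainder h).toEquiv fun a => ?_
  simp only [mem_filter, mem_univ, true_and, mem_product, ← forall_and]
  refine forall₂_congr fun s _ => ?_
  rw [← isUnit_map_iff (ZMod.chineseRemainder h), map_add, map_natCast, Prod.isUnit_iff]
  rfl

theorem admissibleCount_mul (S : Finset ℕ) {M N : ℕ} (hM : M ≠ 0) (hN : N ≠ 0)
    (h : Nat.Coprime M N) :
    admissibleCount S (M * N) = admissibleCount S M * admissibleCount S N := by
  have : NeZero M := ⟨hM⟩
  have : NeZero N := ⟨hN⟩
  have : NeZero (M * N) := ⟨mul_ne_zero hM hN⟩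
  simp only [admissibleCount_eq_card_zmod, card_isUnit_add_mul S h]

theorem admissibleCount_prod_primes (S : Finset ℕ) {t : Finset ℕ} (ht : ∀ p ∈ t, p.Prime) :
    admissibleCount S (∏ p ∈ t, p) = ∏ p ∈ t, admissibleCount S p := by
  induction t using Finset.induction_on with
  | empty => simp [admissibleCount]
  | insert q t hqt ih =>
    have hq := ht q (mem_insert_self q t)
    have ht' : ∀ p ∈ t, p.Prime := fun p hp => ht p (mem_insert_of_mem hp)
    rw [prod_insert hqt, prod_insert hqt, admissibleCount_mul S hq.ne_zero
      (prod_ne_zero_iff.2 fun p hp => (ht' p hp).ne_zero), ih ht']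
    exact Nat.Coprime.prod_right fun p hp =>
      (Nat.coprime_primes hq (ht' p hp)).2 fun h => hqt (h ▸ hp)

theorem admissibleCount_primorial (S : Finset ℕ) (m : ℕ) :
    admissibleCount S (primorial m) = ∏ p ∈ Nat.primesLE m, admissibleCount S p :=
  admissibleCount_prod_primes S fun _ hp => (Nat.mem_primesLE.1 hp).2

theorem admissibleCount_prime {p : ℕ} (hp : p.Prime) (S : Finset ℕ) :
    admissibleCount S p = p - #(S.image (Nat.cast : ℕ → ZMod p)) := by
  have : Fact p.Prime := ⟨hp⟩
  have hfilter : ({a : ZMod p | ∀ s ∈ S, IsUnit (a + s)} : Finset (ZMod p)) =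
      ((S.image (Nat.cast : ℕ → ZMod p)).image Neg.neg)ᶜ := by
    ext a
    simp only [mem_filter, mem_univ, true_and, mem_compl, mem_image, isUnit_iff_ne_zero]
    refine ⟨fun h => ?_,
      fun h s hs has => h ⟨s, ⟨s, hs, rfl⟩, neg_eq_of_add_eq_zero_left has⟩⟩
    rintro ⟨_, ⟨s, hs, rfl⟩, rfl⟩
    exact h s hs (neg_add_cancel _)
  rw [admissibleCount_eq_card_zmod, hfilter, card_compl, ZMod.card,
    card_image_of_injective _ neg_injective]

theorem admissibleCount_prime_of_lt {p : ℕ} (hp : p.Prime) {S : Finset ℕ}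
    (hS : ∀ s ∈ S, s < p) : admissibleCount S p = p - #S := by
  rw [admissibleCount_prime hp, Finset.card_image_of_injOn]
  intro a ha b hb hab
  rwa [ZMod.natCast_eq_natCast_iff', Nat.mod_eq_of_lt (hS a ha),
    Nat.mod_eq_of_lt (hS b hb)] at hab

theorem admissibleCount_pair_prime {p : ℕ} (hp : p.Prime) (g : ℕ) :
    admissibleCount {0, g} p = if p ∣ g then p - 1 else p - 2 := by
  have hg := ZMod.natCast_eq_zero_iff g p
  rw [admissibleCount_prime hp, image_insert, image_singleton, Nat.cast_zero]
  split_ifs with hpg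
  · simp [hg.2 hpg]
  · rw [card_pair fun h => hpg (hg.1 h.symm)]

theorem nGaps_eq_card_range {N : ℕ} (hN : N ≠ 1) (g j : ℕ) :
    nGaps N g j = #{a ∈ range N | Nat.Coprime a N ∧ Nat.Coprime (a + g) N ∧
      #{b ∈ Ioo a (a + g) | Nat.Coprime b N} = j - 1} := by
  unfold nGaps
  congr 1
  ext a
  simp only [mem_filter, mem_Icc, mem_range, and_congr_left_iff]
  intro ha
  have ha0 : a ≠ 0 := by rintro rfl; exact hN (by simpa using ha.1)
  have haN : a ≠ N := by rintro rfl; exact hN (by simpa using ha.1)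
  omega

theorem nGaps_le_admissibleCount {N : ℕ} (hN : N ≠ 1) (g : ℕ) :
    nGaps N g 1 ≤ admissibleCount {0, g} N := by
  rw [nGaps_eq_card_range hN]
  refine card_le_card fun a ha => ?_
  simp only [mem_filter, mem_insert, mem_singleton, forall_eq_or_imp, forall_eq,
    add_zero] at ha ⊢
  exact ⟨ha.1, ha.2.1, ha.2.2.1⟩

theorem admissibleCount_le_nGaps_add {N : ℕ} (hN : N ≠ 1) (g : ℕ) :
    admissibleCount {0, g} N ≤ nGaps N g 1 + ∑ t ∈ Ioo 0 g, admissibleCount {0, t, g} N := by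
  rw [nGaps_eq_card_range hN]
  refine (card_le_card fun a ha => ?_).trans ((card_union_le _ _).trans
    (Nat.add_le_add_left card_biUnion_le _))
  simp only [mem_filter, mem_insert, mem_singleton, forall_eq_or_imp, forall_eq,
    add_zero] at ha
  obtain ⟨haN, ha, hag⟩ := ha
  -- Otherwise some totative `b = a + t` with `0 < t < g` lies strictly between `a` and `a + g`.
  by_cases hgap : #{b ∈ Ioo a (a + g) | Nat.Coprime b N} = 0
  · exact mem_union_left _ (mem_filter.2 ⟨haN, ha, hag, hgap⟩)
  obtain ⟨b, hb⟩ := card_ne_zero.1 hgap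
  simp only [mem_filter, mem_Ioo] at hb
  refine mem_union_right _ (mem_biUnion.2 ⟨b - a, by simp only [mem_Ioo]; omega, ?_⟩)
  simp only [mem_filter, mem_insert, mem_singleton, forall_eq_or_imp, forall_eq, add_zero]
  exact ⟨haN, ha, by rw [Nat.add_sub_cancel' hb.1.1.le]; exact hb.2, hag⟩

theorem nGaps_two {N : ℕ} (hN : 2 ∣ N) : nGaps N 2 1 = admissibleCount {0, 2} N := by
  have hN1 : N ≠ 1 := by rintro rfl; omega
  -- `a` and `a + 1` are never both coprime to an even `N`.
  have hconsec : admissibleCount {0, 1, 2} N = 0 := by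
    refine card_eq_zero.2 (filter_eq_empty_iff.2 fun a _ ha => ?_)
    have h0 := Nat.coprime_two_right.1 ((ha 0 (by simp)).coprime_dvd_right hN)
    have h1 := Nat.coprime_two_right.1 ((ha 1 (by simp)).coprime_dvd_right hN)
    exact (Nat.odd_add_one.1 h1) (by simpa using h0)
  refine le_antisymm (nGaps_le_admissibleCount hN1 2) ?_
  have hIoo : Ioo 0 2 = {1} := rfl
  simpa [hIoo, hconsec] using admissibleCount_le_nGaps_add hN1 2

theorem tendsto_sum_primesLE_one_div :
    Tendsto (fun m => ∑ p ∈ Nat.primesLE m, (1 / p : ℝ)) atTop atTop := by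
  have hdiv := (not_summable_iff_tendsto_nat_atTop_of_nonneg fun i =>
    Set.indicator_nonneg (fun n _ => by positivity) i).1 not_summable_one_div_on_primes
  refine (hdiv.comp (tendsto_add_atTop_nat 1)).congr fun m => ?_
  simp [Nat.primesLE, Nat.primesBelow, sum_filter, Set.indicator_apply]

theorem tendsto_prod_primesLE_of_le_exp {f : ℕ → ℝ} (a : ℕ)
    (hf : ∀ p, p.Prime → a < p → 0 ≤ f p ∧ f p ≤ Real.exp (-(1 / p))) :
    Tendsto (fun m => ∏ p ∈ Nat.primesLE m, f p) atTop (𝓝 0) := by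
  set large := fun m => ∏ p ∈ Nat.primesLE m with a < p, f p
  have hlarge : Tendsto large atTop (𝓝 0) := by
    have hexp : Tendsto (fun m => Real.exp
        (∑ p ∈ Nat.primesLE a, (1 / p : ℝ) - ∑ p ∈ Nat.primesLE m, (1 / p : ℝ)))
        atTop (𝓝 0) :=
      Real.tendsto_exp_atBot.comp (tendsto_atBot_add_const_left _ _
        (tendsto_neg_atTop_atBot.comp tendsto_sum_primesLE_one_div))
    have hf' : ∀ m, ∀ p ∈ {p ∈ Nat.primesLE m | a < p},
        0 ≤ f p ∧ f p ≤ Real.exp (-(1 / p)) :=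
      fun m p hp => hf p (Nat.mem_primesLE.1 (mem_filter.1 hp).1).2 (mem_filter.1 hp).2
    refine squeeze_zero (fun m => prod_nonneg fun p hp => (hf' m p hp).1) (fun m => ?_) hexp
    have hsmall : ∑ p ∈ Nat.primesLE m with ¬a < p, (1 / p : ℝ) ≤
        ∑ p ∈ Nat.primesLE a, (1 / p : ℝ) :=
      sum_le_sum_of_subset_of_nonneg (fun p hp => by
        simp only [mem_filter, Nat.mem_primesLE, not_lt] at hp ⊢
        exact ⟨hp.2, hp.1.2⟩) fun _ _ _ => by positivity
    calc large m ≤ ∏ p ∈ Nat.primesLE m with a < p, Real.exp (-(1 / p)) :=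
          prod_le_prod (fun p hp => (hf' m p hp).1) fun p hp => (hf' m p hp).2
      _ = Real.exp (-∑ p ∈ Nat.primesLE m with a < p, (1 / p : ℝ)) := by
          rw [← Real.exp_sum, sum_neg_distrib]
      _ ≤ _ := by
          rw [Real.exp_le_exp, ← sum_filter_not_add_sum_filter (Nat.primesLE m) (fun p => a < p)]
          linarith
  have hsplit : ∀ᶠ m in atTop,
      (∏ p ∈ Nat.primesLE a, f p) * large m = ∏ p ∈ Nat.primesLE m, f p := by
    filter_upwards [eventually_ge_atTop a] with m hm
    rw [← prod_filter_not_mul_prod_filter (Nat.primesLE m) (fun p => a < p)]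
    congr 2
    ext p
    simp only [mem_filter, Nat.mem_primesLE, not_lt]
    exact ⟨fun h => ⟨⟨h.1.trans hm, h.2⟩, h.1⟩, fun h => ⟨h.2, h.1.2⟩⟩
  simpa using (hlarge.const_mul _).congr' hsplit

theorem sub_three_div_sub_two_le_exp {q : ℝ} (hq : 3 ≤ q) :
    (q - 3) / (q - 2) ≤ Real.exp (-(1 / q)) :=
  calc (q - 3) / (q - 2) ≤ 1 - 1 / q := by
        rw [div_le_iff₀ (by linarith)]
        field_simp
        nlinarith
    _ ≤ Real.exp (-(1 / q)) := by linarith [Real.add_one_le_exp (-(1 / q))]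

theorem admissibleCount_primorial_div (S S' : Finset ℕ) (m : ℕ) :
    (admissibleCount S (primorial m) : ℝ) / admissibleCount S' (primorial m) =
      ∏ p ∈ Nat.primesLE m, (admissibleCount S p : ℝ) / admissibleCount S' p := by
  simp only [admissibleCount_primorial, Nat.cast_prod, prod_div_distrib]

theorem admissibleCount_pair_div_prime {q : ℕ} (hq : q.Prime) (n : ℕ) :
    (admissibleCount {0, 2 * n} q : ℝ) / admissibleCount {0, 2} q =
      if q ∣ n ∧ Odd q then ((q : ℝ) - 1) / ((q : ℝ) - 2) else 1 := by
  rcases hq.eq_two_or_odd' with rfl | hodd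
  · simp [admissibleCount_pair_prime Nat.prime_two]
  have hq3 : 3 ≤ q := by
    rcases hodd with ⟨k, rfl⟩
    have := hq.two_le
    omega
  have h2 : ¬ q ∣ 2 := fun h => by have := Nat.le_of_dvd two_pos h; omega
  have hq' : (3 : ℝ) ≤ q := by exact_mod_cast hq3
  simp only [admissibleCount_pair_prime hq, if_neg h2,
    (Nat.coprime_two_right.2 hodd).dvd_mul_left, hodd, and_true]
  split_ifs
  · push_cast [Nat.cast_sub (by omega : 1 ≤ q), Nat.cast_sub (by omega : 2 ≤ q)]; rfl
  · exact div_self (by push_cast [Nat.cast_sub (by omega : 2 ≤ q)]; linarith)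

theorem admissibleCount_pair_div_eq {n m : ℕ} (hn : n ≠ 0) (hm : n ≤ m) :
    (admissibleCount {0, 2 * n} (primorial m) : ℝ) / admissibleCount {0, 2} (primorial m) =
      ∏ q ∈ n.primeFactors.filter (fun q => Odd q), ((q : ℝ) - 1) / ((q : ℝ) - 2) := by
  rw [admissibleCount_primorial_div, prod_congr rfl fun q hq =>
    admissibleCount_pair_div_prime (Nat.mem_primesLE.1 hq).2 n, ← prod_filter]
  congr 1
  ext q
  simp only [mem_filter, Nat.mem_primesLE, Nat.mem_primeFactors]
  exact ⟨fun h => ⟨⟨h.1.2, h.2.1, hn⟩, h.2.2⟩,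
    fun h => ⟨⟨(Nat.le_of_dvd (Nat.pos_of_ne_zero hn) h.1.2.1).trans hm, h.1.1⟩,
      h.1.2.1, h.2⟩⟩

theorem tendsto_admissibleCount_triple_div {t g : ℕ} (ht : 0 < t) (htg : t < g) :
    Tendsto (fun m => (admissibleCount {0, t, g} (primorial m) : ℝ) /
      admissibleCount {0, 2} (primorial m)) atTop (𝓝 0) := by
  simp only [admissibleCount_primorial_div]
  refine tendsto_prod_primesLE_of_le_exp g fun q hq hgq => ⟨by positivity, ?_⟩
  have h2 : ¬ q ∣ 2 := fun h => by have := Nat.le_of_dvd two_pos h; omega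
  have hcard : #({0, t, g} : Finset ℕ) = 3 :=
    card_eq_three.2 ⟨0, t, g, by omega, by omega, by omega, rfl⟩
  rw [admissibleCount_prime_of_lt hq (by simp; omega), hcard, admissibleCount_pair_prime hq,
    if_neg h2, Nat.cast_sub (by omega), Nat.cast_sub (by omega)]
  exact sub_three_div_sub_two_le_exp (by exact_mod_cast (by omega : 3 ≤ q))

theorem nGaps_div_nGaps_two_mem_Icc {N : ℕ} (hN : 2 ∣ N) (g : ℕ) :
    (nGaps N g 1 : ℝ) / nGaps N 2 1 ∈ Set.Icc
      ((admissibleCount {0, g} N : ℝ) / admissibleCount {0, 2} N -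
        ∑ t ∈ Ioo 0 g, (admissibleCount {0, t, g} N : ℝ) / admissibleCount {0, 2} N)
      ((admissibleCount {0, g} N : ℝ) / admissibleCount {0, 2} N) := by
  have hN1 : N ≠ 1 := by rintro rfl; omega
  rw [nGaps_two hN, ← sum_div, ← sub_div]
  refine ⟨div_le_div_of_nonneg_right ?_ (Nat.cast_nonneg _),
    div_le_div_of_nonneg_right (by exact_mod_cast nGaps_le_admissibleCount hN1 g)
      (Nat.cast_nonneg _)⟩
  rw [sub_le_iff_le_add]
  exact_mod_cast admissibleCount_le_nGaps_add hN1 g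

theorem tendsto_nGaps_primorial_div {n : ℕ} (hn : n ≠ 0) :
    Tendsto (fun m => (nGaps (primorial m) (2 * n) 1 : ℝ) / nGaps (primorial m) 2 1) atTop
      (𝓝 (∏ q ∈ n.primeFactors.filter (fun q => Odd q),
        ((q : ℝ) - 1) / ((q : ℝ) - 2))) := by
  have herr : Tendsto (fun m => ∑ t ∈ Ioo 0 (2 * n),
      (admissibleCount {0, t, 2 * n} (primorial m) : ℝ) / admissibleCount {0, 2} (primorial m))
      atTop (𝓝 0) := by
    simpa using tendsto_finsetSum _ fun t ht =>
      tendsto_admissibleCount_triple_div (mem_Ioo.1 ht).1 (mem_Ioo.1 ht).2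
  have hmain := (eventually_ge_atTop n).mono fun m hm =>
    (admissibleCount_pair_div_eq hn hm).symm
  have hbounds := (eventually_ge_atTop 2).mono fun m hm =>
    nGaps_div_nGaps_two_mem_Icc (Nat.prime_two.dvd_primorial_iff.2 hm) (2 * n)
  exact tendsto_of_tendsto_of_tendsto_of_le_of_le'
    (by simpa using (tendsto_const_nhds.congr' hmain).sub herr)
    (tendsto_const_nhds.congr' hmain) (hbounds.mono fun _ h => h.1)
    (hbounds.mono fun _ h => h.2)

theorem tendsto_nthPrime : Tendsto nthPrime atTop atTop :=
  (Nat.nth_strictMono Nat.infinite_setOfPred_prime).tendsto_atTop.comp (tendsto_sub_atTop_nat 1)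

theorem stmt_9 (n : ℕ) (hn : 1 ≤ n) :
    Filter.Tendsto (fun k : ℕ =>
        (nGaps (primorial (nthPrime k)) (2 * n) 1 : ℝ) /
          (nGaps (primorial (nthPrime k)) 2 1 : ℝ))
      Filter.atTop
      (nhds (∏ q ∈ n.primeFactors.filter (fun q => Odd q),
        ((q : ℝ) - 1) / ((q : ℝ) - 2))) :=
  (tendsto_nGaps_primorial_div (by omega)).comp tendsto_nthPrime
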